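/- arXiv:2409.17965 — 2 statements merged into one kernel-verified Lean document; each statement's English description precedes it below -/
import Mathlib

section
/- Let R → S be a pure homomorphism of Noetherian rings of prime characteristic p. If S is F-pure, then R is F-pure. -/
/-!
Tensored with an `R`-module `P`, the Frobenius `P → P ⊗[R] F_* R` followed by the map induced
by `F_* R → F_* S` agrees with `P → P ⊗[R] S → P ⊗[R] F_* S`. The first arrow of the latter is
injective by purity of `R → S`; the second is the Frobenius of `S` tensored over `S` with
`S ⊗[R] P`, hence injective because `S` is F-pure.
-/

universe u

/-- `F_* A`: the ring `A` viewed as a module over itself via the Frobenius `x ↦ x ^ p`. -/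
def FStar (p : ℕ) (A : Type u) : Type u := A

instance (p : ℕ) (A : Type u) [CommRing A] : AddCommGroup (FStar p A) :=
  inferInstanceAs (AddCommGroup A)

instance (p : ℕ) (A : Type u) [CommRing A] [Fact p.Prime] [CharP A p] :
    Module A (FStar p A) := Module.compHom A (frobenius A p)

/-- The Frobenius `A → F_* A`, `x ↦ x ^ p`, as an `A`-linear map. -/
def frobeniusLinear (p : ℕ) (A : Type u) [CommRing A] [Fact p.Prime] [CharP A p] :
    A →ₗ[A] FStar p A where
  toFun x := frobenius A p x
  map_add' x y := map_add (frobenius A p) x y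
  map_smul' r x := map_mul (frobenius A p) r x

/-- A ring `A` of characteristic `p` is *F-pure* if the Frobenius `A → F_* A` is a pure map of
`A`-modules, i.e. stays injective after tensoring with every `A`-module. -/
def IsFPure (p : ℕ) (A : Type u) [CommRing A] [Fact p.Prime] [CharP A p] : Prop :=
  ∀ (P : Type u) [AddCommGroup P] [Module A P],
    Function.Injective (LinearMap.lTensor P (frobeniusLinear p A))

open TensorProduct

section BaseChange

variable {R S : Type*} [CommRing R] [CommRing S] [Algebra R S] (P : Type*) [AddCommGroup P]
  [Module R P] {M N : Type*} [AddCommGroup M] [Module R M] [Module S M] [IsScalarTower R S M]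
  [AddCommGroup N] [Module R N] [Module S N] [IsScalarTower R S N]

variable (R) in
theorem TensorProduct.AlgebraTensorModule.rTensor_comp_cancelBaseChange (f : M →ₗ[S] N) :
    rTensor R P f ∘ₗ (cancelBaseChange R S S M P).toLinearMap =
      (cancelBaseChange R S S N P).toLinearMap ∘ₗ f.rTensor (S ⊗[R] P) := by
  ext; simp

theorem LinearMap.rTensor_restrictScalars_injective (f : M →ₗ[S] N)
    (hf : Function.Injective (f.rTensor (S ⊗[R] P))) :
    Function.Injective ((f.restrictScalars R).rTensor P) := by
  let eM := AlgebraTensorModule.cancelBaseChange R S S M P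
  let eN := AlgebraTensorModule.cancelBaseChange R S S N P
  have hsquare : ⇑((f.restrictScalars R).rTensor P) = eN ∘ f.rTensor (S ⊗[R] P) ∘ eM.symm := by
    ext x
    have := congr($(AlgebraTensorModule.rTensor_comp_cancelBaseChange R P f) (eM.symm x))
    rwa [LinearMap.comp_apply, LinearEquiv.coe_coe, LinearEquiv.apply_symm_apply] at this
  rw [hsquare]
  exact eN.injective.comp (hf.comp eM.symm.injective)

theorem LinearMap.lTensor_restrictScalars_injective (f : M →ₗ[S] N)
    (hf : Function.Injective (f.lTensor (S ⊗[R] P))) :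
    Function.Injective ((f.restrictScalars R).lTensor P) := by
  rw [LinearMap.lTensor_inj_iff_rTensor_inj] at hf ⊢
  exact f.rTensor_restrictScalars_injective P hf

end BaseChange

section FStar

variable (p : ℕ) [Fact p.Prime] (R S : Type u) [CommRing R] [CommRing S] [CharP R p] [CharP S p]
  [Algebra R S]

instance (priority := low) FStar.instModuleOfAlgebra : Module R (FStar p S) :=
  Module.compHom (FStar p S) (algebraMap R S)

instance FStar.instIsScalarTower : IsScalarTower R S (FStar p S) where
  smul_assoc r s y := by
    rw [Algebra.smul_def]
    change frobenius S p (algebraMap R S r * s) * (show S from y) =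
      frobenius S p (algebraMap R S r) * (frobenius S p s * (show S from y))
    rw [map_mul, mul_assoc]

def FStar.map : FStar p R →ₗ[R] FStar p S where
  toFun x := algebraMap R S x
  map_add' := map_add (algebraMap R S)
  map_smul' r x := by
    change algebraMap R S (frobenius R p r * (show R from x)) =
      frobenius S p (algebraMap R S r) * algebraMap R S (show R from x)
    rw [map_mul, RingHom.map_frobenius]

theorem restrictScalars_frobeniusLinear_comp_linearMap :
    (frobeniusLinear p S).restrictScalars R ∘ₗ Algebra.linearMap R S =
      FStar.map p R S ∘ₗ frobeniusLinear p R :=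
  LinearMap.ext fun x => (RingHom.map_frobenius (algebraMap R S) p x).symm

end FStar

theorem isFPure_of_pure_ringHom_general (p : ℕ) [Fact p.Prime]
    (R S : Type u) [CommRing R] [CommRing S]
    [CharP R p] [CharP S p] [Algebra R S]
    (hpure : ∀ (P : Type u) [AddCommGroup P] [Module R P],
      Function.Injective (LinearMap.lTensor P (Algebra.linearMap R S)))
    (hS : IsFPure p S) : IsFPure p R := by
  intro P _ _
  have hfrobS : Function.Injective (((frobeniusLinear p S).restrictScalars R).lTensor P) :=
    (frobeniusLinear p S).lTensor_restrictScalars_injective P (hS _)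
  have hcomp := hfrobS.comp (hpure P)
  rw [← LinearMap.coe_comp, ← LinearMap.lTensor_comp,
    restrictScalars_frobeniusLinear_comp_linearMap, LinearMap.lTensor_comp,
    LinearMap.coe_comp] at hcomp
  exact hcomp.of_comp

/-- If `R → S` is a pure homomorphism of Noetherian rings of prime characteristic `p`
(purity meaning that `P ≅ P ⊗[R] R → P ⊗[R] S` is injective for every `R`-module `P`)
and `S` is F-pure, then `R` is F-pure. -/
theorem isFPure_of_pure_ringHom (p : ℕ) [Fact p.Prime]
    (R S : Type u) [CommRing R] [CommRing S] [IsNoetherianRing R] [IsNoetherianRing S]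
    [CharP R p] [CharP S p] [Algebra R S]
    (hpure : ∀ (P : Type u) [AddCommGroup P] [Module R P],
      Function.Injective (LinearMap.lTensor P (Algebra.linearMap R S)))
    (hS : IsFPure p S) : IsFPure p R :=
  isFPure_of_pure_ringHom_general p R S hpure hS
end

section
/- Let R be a Noetherian ring of prime characteristic p. Then R is F-pure if and only if the localization R_m is F-pure for every maximal ideal m of R. -/
universe u

/-- Localizations at primes of a ring of characteristic `p` have characteristic `p`. -/
instance (R : Type u) [CommRing R] (p : ℕ) [Fact p.Prime] [CharP R p]
    (m : Ideal R) [m.IsPrime] : CharP (Localization.AtPrime m) p := by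
  refine (CharP.charP_iff_prime_eq_zero Fact.out).mpr ?_
  rw [← map_natCast (algebraMap R (Localization.AtPrime m)) p, CharP.cast_eq_zero, map_zero]

/-! Since the Frobenius `R → F_* R` is `R`-linear out of `R`, it is pure iff `x ⊗ F(1) = 0`
forces `x = 0` in every module. The `R`-module `F_*(M⁻¹R)` is the localization of `F_*R`, hence its
base change to `M⁻¹R`; so for an `M⁻¹R`-module `Q` the element `x ⊗ F(1)` of
`Q ⊗[M⁻¹R] F_*(M⁻¹R)` corresponds to that of `Q ⊗[R] F_*R`. This shows F-purity passes to
localizations, and conversely, if `x ⊗ F(1) = 0` over `R` then the image of `x` vanishes in every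
`P_𝔪`, so `x = 0`. -/

open TensorProduct

theorem LinearMap.lTensor_injective_iff_tmul_map_one {A M P : Type*} [CommRing A]
    [AddCommGroup M] [Module A M] [AddCommGroup P] [Module A P] (f : A →ₗ[A] M) :
    Function.Injective (f.lTensor P) ↔ ∀ x : P, x ⊗ₜ[A] f 1 = 0 → x = 0 := by
  have hf : f.lTensor P =
      (TensorProduct.mk A P M).flip (f 1) ∘ₗ (TensorProduct.rid A P).toLinearMap := by
    ext x
    simp
  rw [hf, LinearMap.coe_comp, LinearEquiv.coe_coe,
    Function.Injective.of_comp_iff' _ (TensorProduct.rid A P).bijective, injective_iff_map_eq_zero]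
  rfl

namespace FStar

variable (p : ℕ) (A : Type u) [CommRing A]

def of : A ≃+ FStar p A := AddEquiv.refl A

variable {p A} [Fact p.Prime] [CharP A p]

theorem smul_of (a x : A) : a • of p A x = of p A (a ^ p * x) := rfl

end FStar

theorem frobeniusLinear_apply (p : ℕ) {A : Type u} [CommRing A] [Fact p.Prime] [CharP A p]
    (x : A) : frobeniusLinear p A x = FStar.of p A (x ^ p) := rfl

theorem isFPure_iff (p : ℕ) (A : Type u) [CommRing A] [Fact p.Prime] [CharP A p] :
    IsFPure p A ↔ ∀ (P : Type u) [AddCommGroup P] [Module A P] (x : P),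
      x ⊗ₜ[A] frobeniusLinear p A 1 = 0 → x = 0 := by
  simp only [IsFPure, LinearMap.lTensor_injective_iff_tmul_map_one]

theorem IsBaseChange.tensorEquiv_tmul {R S M N P : Type*} [CommSemiring R] [CommSemiring S]
    [Algebra R S] [AddCommMonoid M] [Module R M] [AddCommMonoid N] [Module R N] [Module S N]
    [IsScalarTower R S N] [AddCommGroup P] [Module R P] [Module S P] [IsScalarTower R S P]
    {f : M →ₗ[R] N} (hf : IsBaseChange S f) (y : P) (x : M) :
    hf.tensorEquiv P (y ⊗ₜ f x) = y ⊗ₜ x := by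
  simp [IsBaseChange.tensorEquiv, IsBaseChange.equiv_symm_apply]

section Localization

variable (p : ℕ) [Fact p.Prime] {R : Type u} [CommRing R] (M : Submonoid R)
  [CharP (Localization M) p]

instance : Module R (FStar p (Localization M)) :=
  Module.compHom _ (algebraMap R (Localization M))

instance : IsScalarTower R (Localization M) (FStar p (Localization M)) :=
  ⟨fun r s x => by rw [Algebra.smul_def, mul_smul]; rfl⟩

theorem FStar.algebraMap_smul_of (r : R) (x : Localization M) :
    r • FStar.of p (Localization M) x =
      FStar.of p (Localization M) (algebraMap R (Localization M) r ^ p * x) :=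
  rfl

variable [CharP R p]

def FStar.localizationMap : FStar p R →ₗ[R] FStar p (Localization M) where
  toFun x := FStar.of p _ (algebraMap R (Localization M) ((FStar.of p R).symm x))
  map_add' x y := map_add (algebraMap R (Localization M)) _ _
  map_smul' r x := by
    change FStar.of p _ (algebraMap R _ (r ^ p * (FStar.of p R).symm x)) = _
    rw [map_mul, map_pow]
    rfl

theorem FStar.localizationMap_of (x : R) :
    FStar.localizationMap p M (FStar.of p R x) =
      FStar.of p (Localization M) (algebraMap R (Localization M) x) :=
  rfl

instance : IsLocalizedModule M (FStar.localizationMap p M) where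
  map_units s := by
    rw [Module.End.isUnit_iff]
    convert (IsLocalization.map_units (Localization M) s).smul_bijective
      (β := FStar p (Localization M))
    exact algebraMap_smul (Localization M) (s : R) _
  surj y := by
    obtain ⟨y, rfl⟩ := (FStar.of p _).surjective y
    obtain ⟨⟨a, s⟩, h : y * algebraMap R _ s = algebraMap R _ a⟩ := IsLocalization.surj M y
    refine ⟨⟨FStar.of p R (a * (s : R) ^ (p - 1)), s⟩, ?_⟩
    -- `s • y = s ^ p * y = s ^ (p - 1) * a`
    change (s : R) • FStar.of p _ y = _
    rw [FStar.algebraMap_smul_of, FStar.localizationMap_of]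
    congr 1
    rw [map_mul, map_pow, ← h, ← pow_sub_one_mul (Fact.out : p.Prime).ne_zero]
    ring
  exists_of_eq {x₁ x₂} h := by
    obtain ⟨y₁, rfl⟩ := (FStar.of p R).surjective x₁
    obtain ⟨y₂, rfl⟩ := (FStar.of p R).surjective x₂
    obtain ⟨c, hc : (c : R) * y₁ = c * y₂⟩ := IsLocalization.exists_of_eq (M := M)
      ((FStar.of p (Localization M)).injective h)
    refine ⟨c, ?_⟩
    rw [Submonoid.smul_def, Submonoid.smul_def, FStar.smul_of, FStar.smul_of]
    congr 1
    rw [← pow_sub_one_mul (Fact.out : p.Prime).ne_zero, mul_assoc, mul_assoc, hc]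

theorem FStar.localizationMap_frobeniusLinear_one :
    FStar.localizationMap p M (frobeniusLinear p R 1) = frobeniusLinear p (Localization M) 1 := by
  rw [frobeniusLinear_apply, frobeniusLinear_apply, FStar.localizationMap_of, map_pow, map_one]

theorem tmul_frobeniusLinear_one_eq_zero_iff (Q : Type*) [AddCommGroup Q] [Module R Q]
    [Module (Localization M) Q] [IsScalarTower R (Localization M) Q] (y : Q) :
    y ⊗ₜ[R] frobeniusLinear p R 1 = 0 ↔
      y ⊗ₜ[Localization M] frobeniusLinear p (Localization M) 1 = 0 := by
  rw [← FStar.localizationMap_frobeniusLinear_one, ← IsBaseChange.tensorEquiv_tmul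
    (IsLocalizedModule.isBaseChange M (Localization M) (FStar.localizationMap p M)),
    LinearEquiv.map_eq_zero_iff]

end Localization

theorem IsFPure.localization (p : ℕ) [Fact p.Prime] {R : Type u} [CommRing R] [CharP R p]
    (M : Submonoid R) [CharP (Localization M) p] (h : IsFPure p R) :
    IsFPure p (Localization M) := by
  rw [isFPure_iff] at h ⊢
  intro Q _ _ y hy
  let : Module R Q := Module.compHom Q (algebraMap R (Localization M))
  have : IsScalarTower R (Localization M) Q :=
    ⟨fun r s q => by rw [Algebra.smul_def, mul_smul]; rfl⟩
  exact h Q y ((tmul_frobeniusLinear_one_eq_zero_iff p M Q y).2 hy)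

theorem IsFPure.of_localization_maximal (p : ℕ) [Fact p.Prime] {R : Type u} [CommRing R]
    [CharP R p] (h : ∀ (m : Ideal R) [m.IsMaximal], IsFPure p (Localization.AtPrime m)) :
    IsFPure p R := by
  rw [isFPure_iff]
  intro P _ _ x hx
  refine Module.eq_zero_of_localization_maximal
    (fun (m : Ideal R) _ => LocalizedModule m.primeCompl P)
    (fun m _ => LocalizedModule.mkLinearMap m.primeCompl P) x fun m _ => ?_
  refine (isFPure_iff p _).1 (h m) _ _ ?_
  rw [← tmul_frobeniusLinear_one_eq_zero_iff]
  simpa using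
    congrArg (LinearMap.rTensor (FStar p R) (LocalizedModule.mkLinearMap m.primeCompl P)) hx

theorem isFPure_iff_forall_localization_atPrime_general (p : ℕ) [Fact p.Prime]
    (R : Type u) [CommRing R] [CharP R p] :
    IsFPure p R ↔ ∀ (m : Ideal R) [m.IsMaximal], IsFPure p (Localization.AtPrime m) :=
  ⟨fun h m _ => h.localization p m.primeCompl, IsFPure.of_localization_maximal p⟩

/-- A Noetherian ring `R` of prime characteristic `p` is F-pure if and only if the
localization `R_𝔪` is F-pure for every maximal ideal `𝔪` of `R`. -/
theorem isFPure_iff_forall_localization_atPrime (p : ℕ) [Fact p.Prime]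
    (R : Type u) [CommRing R] [IsNoetherianRing R] [CharP R p] :
    IsFPure p R ↔ ∀ (m : Ideal R) [m.IsMaximal], IsFPure p (Localization.AtPrime m) :=
  isFPure_iff_forall_localization_atPrime_general p R
end
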